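/- arXiv:2308.07678 — 3 statements merged into one kernel-verified Lean document; each statement's English description precedes it below -/
import Mathlib

section
/- For 0 < κ ≤ 1, the function g_κ(x) = Φ(√(1/κ)(κ−1)x) + e^{2x²}·Φ(−√(1/κ)(κ+1)x) is strictly decreasing on (0,∞). -/
noncomputable def Phi (y : ℝ) : ℝ :=
  (Real.sqrt (2 * Real.pi))⁻¹ * ∫ t in Set.Iic y, Real.exp (-t ^ 2 / 2)

noncomputable def gfun (κ x : ℝ) : ℝ :=
  Phi (Real.sqrt (1 / κ) * (κ - 1) * x) +
    Real.exp (2 * x ^ 2) * Phi (-(Real.sqrt (1 / κ) * (κ + 1) * x))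

/-! With `a = √(1/κ)(κ - 1) ≤ 0` and `b = √(1/κ)(κ + 1) > 0` one has `b² - a² = 4`, hence
`e^{2x²} φ(bx) = φ(ax)` and `g_κ'(x) = (a - b) φ(ax) + 4x e^{2x²} Φ(-bx)`. Mills' inequality
`Φ(-z) < φ(z) / z` bounds the last term by `(4 / b) φ(ax)`, and `a - b + 4 / b = a (b - a) / b ≤ 0`. -/

open MeasureTheory Set Real Filter Topology

noncomputable def phi (y : ℝ) : ℝ := (√(2 * π))⁻¹ * exp (-y ^ 2 / 2)

lemma phi_pos (y : ℝ) : 0 < phi y := by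
  unfold phi; positivity

lemma phi_neg (y : ℝ) : phi (-y) = phi y := by
  simp [phi]

lemma exp_mul_phi_eq_phi_of_sq_sub_sq {a b : ℝ} (hab : b ^ 2 - a ^ 2 = 4) (x : ℝ) :
    exp (2 * x ^ 2) * phi (b * x) = phi (a * x) := by
  rw [phi, phi, mul_left_comm, ← exp_add]
  congr 2
  linear_combination (-x ^ 2 / 2) * hab

lemma integrable_exp_neg_sq_div_two : Integrable fun t : ℝ => exp (-t ^ 2 / 2) := by
  simpa [neg_div, div_eq_inv_mul] using integrable_exp_neg_mul_sq (b := 1 / 2) (by norm_num)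

lemma integrable_mul_exp_neg_sq_div_two : Integrable fun t : ℝ => t * exp (-t ^ 2 / 2) := by
  simpa [neg_div, div_eq_inv_mul] using integrable_mul_exp_neg_mul_sq (b := 1 / 2) (by norm_num)

lemma hasDerivAt_Phi (y : ℝ) : HasDerivAt Phi (phi y) y := by
  have hint := integrable_exp_neg_sq_div_two
  have hPhi : Phi = fun z => (√(2 * π))⁻¹ *
      ((∫ t in Iic 0, exp (-t ^ 2 / 2)) + ∫ t in (0 : ℝ)..z, exp (-t ^ 2 / 2)) := by
    funext z
    rw [Phi, ← intervalIntegral.integral_Iic_sub_Iic hint.integrableOn hint.integrableOn]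
    ring
  have hFTC : HasDerivAt (fun z => ∫ t in (0 : ℝ)..z, exp (-t ^ 2 / 2)) (exp (-y ^ 2 / 2)) y :=
    intervalIntegral.integral_hasDerivAt_right hint.intervalIntegrable
      hint.aestronglyMeasurable.stronglyMeasurableAtFilter (by fun_prop)
  rw [hPhi]
  exact (hFTC.const_add _).const_mul _

lemma integral_Ioi_mul_exp_neg_sq_div_two (y : ℝ) :
    ∫ t in Ioi y, t * exp (-t ^ 2 / 2) = exp (-y ^ 2 / 2) := by
  have hderiv (t : ℝ) : HasDerivAt (fun t => -exp (-t ^ 2 / 2)) (t * exp (-t ^ 2 / 2)) t := by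
    have hexponent : HasDerivAt (fun t : ℝ => -t ^ 2 / 2) (-t) t :=
      ((hasDerivAt_pow 2 t).fun_neg.div_const 2).congr_deriv (by simp; ring)
    exact hexponent.exp.fun_neg.congr_deriv (by ring)
  have hlim : Tendsto (fun t : ℝ => -exp (-t ^ 2 / 2)) atTop (𝓝 (-0)) := by
    refine (tendsto_exp_atBot.comp ?_).neg
    exact (tendsto_neg_atBot_iff.2 (tendsto_pow_atTop two_ne_zero)).atBot_div_const two_pos
  simpa using integral_Ioi_of_hasDerivAt_of_tendsto (by fun_prop : Continuous _).continuousWithinAt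
    (fun t _ => hderiv t) integrable_mul_exp_neg_sq_div_two.integrableOn hlim

lemma integral_Ioi_exp_neg_sq_div_two_lt {y : ℝ} (hy : 0 < y) :
    ∫ t in Ioi y, exp (-t ^ 2 / 2) < exp (-y ^ 2 / 2) / y := by
  have hint₁ := integrable_mul_exp_neg_sq_div_two.integrableOn (s := Ioi y)
  have hint₂ := (integrable_exp_neg_sq_div_two.const_mul y).integrableOn (s := Ioi y)
  have hgap_pos (t : ℝ) (ht : t ∈ Ioi y) : 0 < t * exp (-t ^ 2 / 2) - y * exp (-t ^ 2 / 2) := by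
    rw [← sub_mul]
    exact mul_pos (sub_pos.2 ht) (exp_pos _)
  have hgap : 0 < ∫ t in Ioi y, (t * exp (-t ^ 2 / 2) - y * exp (-t ^ 2 / 2)) := by
    rw [setIntegral_pos_iff_support_of_nonneg_ae
      (ae_restrict_of_forall_mem measurableSet_Ioi fun t ht => (hgap_pos t ht).le)
      (hint₁.sub hint₂)]
    calc (0 : ENNReal) < volume (Ioi y) := by simp
      _ ≤ _ := measure_mono fun t ht => mem_inter (hgap_pos t ht).ne' ht
  rw [integral_sub hint₁ hint₂, integral_const_mul, integral_Ioi_mul_exp_neg_sq_div_two] at hgap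
  rw [lt_div_iff₀ hy]
  linarith

lemma Phi_neg_lt_phi_div {z : ℝ} (hz : 0 < z) : Phi (-z) < phi z / z := by
  have hreflect : ∫ t in Iic (-z), exp (-t ^ 2 / 2) = ∫ t in Ioi z, exp (-t ^ 2 / 2) := by
    have h := integral_comp_neg_Iic (-z) fun t => exp (-t ^ 2 / 2)
    simp only [neg_sq, neg_neg] at h
    exact h
  rw [Phi, hreflect, phi, mul_div_assoc]
  exact mul_lt_mul_of_pos_left (integral_Ioi_exp_neg_sq_div_two_lt hz) (by positivity)

lemma hasDerivAt_Phi_add_exp_mul_Phi (a b x : ℝ) :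
    HasDerivAt (fun x => Phi (a * x) + exp (2 * x ^ 2) * Phi (-(b * x)))
      (a * phi (a * x) + exp (2 * x ^ 2) * (4 * x * Phi (-(b * x)) - b * phi (b * x))) x := by
  have hPhi_a : HasDerivAt (fun x => Phi (a * x)) (phi (a * x) * a) x :=
    (hasDerivAt_Phi (a * x)).comp x (hasDerivAt_const_mul a)
  have hPhi_b : HasDerivAt (fun x => Phi (-(b * x))) (phi (-(b * x)) * -b) x :=
    (hasDerivAt_Phi (-(b * x))).comp (h := fun x => -(b * x)) x (hasDerivAt_const_mul b).fun_neg
  have hexp : HasDerivAt (fun x => exp (2 * x ^ 2)) (exp (2 * x ^ 2) * (2 * (2 * x))) x :=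
    ((hasDerivAt_pow 2 x).const_mul 2).exp.congr_deriv (by simp)
  refine (hPhi_a.add (hexp.mul hPhi_b)).congr_deriv ?_
  rw [phi_neg]
  ring

lemma strictAntiOn_Phi_add_exp_mul_Phi {a b : ℝ} (ha : a ≤ 0) (hb : 0 < b)
    (hab : b ^ 2 - a ^ 2 = 4) :
    StrictAntiOn (fun x => Phi (a * x) + exp (2 * x ^ 2) * Phi (-(b * x))) (Ioi 0) := by
  refine strictAntiOn_of_hasDerivWithinAt_neg (convex_Ioi 0)
    (fun x _ => (hasDerivAt_Phi_add_exp_mul_Phi a b x).continuousAt.continuousWithinAt)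
    (fun x _ => (hasDerivAt_Phi_add_exp_mul_Phi a b x).hasDerivWithinAt) ?_
  intro x hx
  rw [interior_Ioi, mem_Ioi] at hx
  have hba : 0 ≤ b - a := by nlinarith
  have hgauss := exp_mul_phi_eq_phi_of_sq_sub_sq hab x
  calc a * phi (a * x) + exp (2 * x ^ 2) * (4 * x * Phi (-(b * x)) - b * phi (b * x))
      < a * phi (a * x) + exp (2 * x ^ 2) * (4 * x * (phi (b * x) / (b * x)) - b * phi (b * x)) := by
        gcongr
        exact Phi_neg_lt_phi_div (mul_pos hb hx)
    _ = a * (b - a) / b * phi (a * x) := by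
        rw [← hgauss]
        field_simp
        linear_combination -phi (x * b) * hab
    _ ≤ 0 :=
        mul_nonpos_of_nonpos_of_nonneg (div_nonpos_of_nonpos_of_nonneg
          (mul_nonpos_of_nonpos_of_nonneg ha hba) hb.le) (phi_pos _).le

theorem stmt4 (κ : ℝ) (hκ0 : 0 < κ) (hκ1 : κ ≤ 1) :
    StrictAntiOn (gfun κ) (Set.Ioi 0) := by
  have hs : 0 < √(1 / κ) := sqrt_pos.2 (by positivity)
  have hsq : √(1 / κ) ^ 2 * κ = 1 := by
    rw [sq_sqrt (by positivity)]
    field_simp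
  exact strictAntiOn_Phi_add_exp_mul_Phi
    (mul_nonpos_of_nonneg_of_nonpos hs.le (by linarith)) (by positivity)
    (by linear_combination 4 * hsq)
end

section
/- For 0 < κ < 1, the infimum over x ∈ (0,∞) of g_κ(x) = Φ(√(1/κ)(κ−1)x) + e^{2x²}·Φ(−√(1/κ)(κ+1)x) equals 0, and this infimum equals the limit of g_κ(x) as x → ∞. -/
/-!
Both terms of `gfun κ x` are Gaussian tails `Φ(-c x)` with `c > 0`, and the bound
`Φ(-z) ≤ φ(z) / z` makes `e^{a x²} Φ(-c x)` tend to `0` whenever `a < c² / 2`. For the second term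
`a = 2` and `c² / 2 = (κ + 1)² / (2κ)`, which exceeds `2` exactly because `(κ - 1)² > 0`.
Since `gfun κ ≥ 0`, its infimum over `(0, ∞)` is its limit at infinity.
-/

open Real MeasureTheory Set Filter Topology

lemma integral_Iic_neg_exp_neg_sq_div_two_le {z : ℝ} (hz : 0 < z) :
    ∫ t in Iic (-z), exp (-t ^ 2 / 2) ≤ exp (-z ^ 2 / 2) / z := by
  have hgauss : Integrable fun t : ℝ => exp (-t ^ 2 / 2) := by
    simpa [neg_div, div_eq_inv_mul] using integrable_exp_neg_mul_sq (by norm_num : (0 : ℝ) < 1 / 2)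
  calc ∫ t in Iic (-z), exp (-t ^ 2 / 2)
      ≤ ∫ t in Iic (-z), exp (z ^ 2 / 2) * exp (z * t) := by
        refine setIntegral_mono_on hgauss.integrableOn
          ((integrableOn_exp_mul_Iic hz _).const_mul _) measurableSet_Iic fun t _ => ?_
        rw [← exp_add]
        exact exp_le_exp.2 (by nlinarith [sq_nonneg (t + z)])
    _ = exp (-z ^ 2 / 2) / z := by
        rw [integral_const_mul, integral_exp_mul_Iic hz, mul_div_assoc', ← exp_add]
        ring_nf

lemma Phi_nonneg (y : ℝ) : 0 ≤ Phi y :=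
  mul_nonneg (inv_nonneg.2 (sqrt_nonneg _))
    (setIntegral_nonneg measurableSet_Iic fun _ _ => (exp_pos _).le)

lemma Phi_neg_le {z : ℝ} (hz : 0 < z) :
    Phi (-z) ≤ (sqrt (2 * π))⁻¹ * (exp (-z ^ 2 / 2) / z) :=
  mul_le_mul_of_nonneg_left (integral_Iic_neg_exp_neg_sq_div_two_le hz)
    (inv_nonneg.2 (sqrt_nonneg _))

lemma tendsto_exp_mul_sq_mul_Phi_neg_mul {a c : ℝ} (hc : 0 < c) (hac : a < c ^ 2 / 2) :
    Tendsto (fun x => exp (a * x ^ 2) * Phi (-(c * x))) atTop (𝓝 0) := by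
  have hexp : Tendsto (fun x : ℝ => exp ((a - c ^ 2 / 2) * x ^ 2)) atTop (𝓝 0) :=
    tendsto_exp_atBot.comp <|
      (tendsto_pow_atTop two_ne_zero).const_mul_atTop_of_neg (sub_neg.2 hac)
  have hinv : Tendsto (fun x : ℝ => (c * x)⁻¹) atTop (𝓝 0) :=
    tendsto_inv_atTop_zero.comp (tendsto_id.const_mul_atTop hc)
  have hbound : Tendsto (fun x : ℝ => (sqrt (2 * π))⁻¹ * (exp ((a - c ^ 2 / 2) * x ^ 2) *
      (c * x)⁻¹)) atTop (𝓝 0) := by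
    simpa using (hexp.mul hinv).const_mul (sqrt (2 * π))⁻¹
  refine squeeze_zero' (Eventually.of_forall fun x => mul_nonneg (exp_pos _).le (Phi_nonneg _))
    ?_ hbound
  filter_upwards [eventually_gt_atTop 0] with x hx
  calc exp (a * x ^ 2) * Phi (-(c * x))
      ≤ exp (a * x ^ 2) * ((sqrt (2 * π))⁻¹ * (exp (-(c * x) ^ 2 / 2) / (c * x))) :=
        mul_le_mul_of_nonneg_left (Phi_neg_le (mul_pos hc hx)) (exp_pos _).le
    _ = (sqrt (2 * π))⁻¹ * (exp ((a - c ^ 2 / 2) * x ^ 2) * (c * x)⁻¹) := by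
        rw [show (a - c ^ 2 / 2) * x ^ 2 = a * x ^ 2 + -(c * x) ^ 2 / 2 by ring, exp_add]
        ring

lemma csInf_image_Ioi_eq_of_tendsto {f : ℝ → ℝ} {a l : ℝ} (hf : ∀ x ∈ Ioi a, l ≤ f x)
    (hlim : Tendsto f atTop (𝓝 l)) : sInf (f '' Ioi a) = l := by
  refine IsGLB.csInf_eq ⟨?_, fun b hb => ?_⟩ (nonempty_Ioi.image f)
  · rintro _ ⟨x, hx, rfl⟩
    exact hf x hx
  · refine ge_of_tendsto hlim ?_
    filter_upwards [eventually_gt_atTop a] with x hx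
    exact hb ⟨x, hx, rfl⟩

lemma gfun_nonneg (κ x : ℝ) : 0 ≤ gfun κ x :=
  add_nonneg (Phi_nonneg _) (mul_nonneg (exp_pos _).le (Phi_nonneg _))

theorem stmt5 (κ : ℝ) (hκ0 : 0 < κ) (hκ1 : κ < 1) :
    sInf (gfun κ '' Set.Ioi 0) = 0 ∧
      Filter.Tendsto (gfun κ) Filter.atTop (nhds 0) := by
  have hs : 0 < sqrt (1 / κ) := sqrt_pos.2 (by positivity)
  have hs2 : sqrt (1 / κ) ^ 2 = 1 / κ := sq_sqrt (by positivity)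
  have hlower : Tendsto (fun x => exp (0 * x ^ 2) * Phi (-(sqrt (1 / κ) * (1 - κ) * x)))
      atTop (𝓝 0) :=
    tendsto_exp_mul_sq_mul_Phi_neg_mul (mul_pos hs (by linarith)) (by positivity)
  have hupper : Tendsto (fun x => exp (2 * x ^ 2) * Phi (-(sqrt (1 / κ) * (κ + 1) * x)))
      atTop (𝓝 0) := by
    refine tendsto_exp_mul_sq_mul_Phi_neg_mul (mul_pos hs (by linarith)) ?_
    rw [mul_pow, hs2, lt_div_iff₀ two_pos, one_div_mul_eq_div, lt_div_iff₀ hκ0]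
    nlinarith [sq_pos_of_ne_zero (sub_ne_zero.2 hκ1.ne)]
  have hlim : Tendsto (gfun κ) atTop (𝓝 0) := by
    refine (add_zero (0 : ℝ) ▸ hlower.add hupper).congr fun x => ?_
    rw [zero_mul, exp_zero, one_mul, gfun, ← neg_sub κ, mul_neg, neg_mul, neg_neg]
  exact ⟨csInf_image_Ioi_eq_of_tendsto (fun x _ => gfun_nonneg κ x) hlim, hlim⟩
end

section
/- For κ = 1, the infimum over x ∈ (0,∞) of g_1(x) = 1/2 + e^{2x²}·Φ(−2x) equals 1/2, attained as the limit x → ∞. -/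
noncomputable def g1 (x : ℝ) : ℝ := 1 / 2 + Real.exp (2 * x ^ 2) * Phi (-(2 * x))

open MeasureTheory Real Set Filter

lemma gauss_integrableOn (s : Set ℝ) : IntegrableOn (fun t : ℝ => Real.exp (-t ^ 2 / 2)) s := by
  have : (fun t : ℝ => Real.exp (-t ^ 2 / 2)) = fun t : ℝ => Real.exp (-(1/2) * t ^ 2) := by
    ext t; ring_nf
  rw [this]
  exact (integrable_exp_neg_mul_sq (by norm_num)).integrableOn

lemma neg_mul_gauss_integrableOn (s : Set ℝ) :
    IntegrableOn (fun t : ℝ => -t * Real.exp (-t ^ 2 / 2)) s := by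
  have h := integrable_mul_exp_neg_mul_sq (b := 1/2) (by norm_num)
  have : (fun t : ℝ => -t * Real.exp (-t ^ 2 / 2))
      = fun t : ℝ => -(t * Real.exp (-(1/2) * t ^ 2)) := by
    ext t; ring_nf
  rw [this]
  exact (h.neg).integrableOn

lemma integral_neg_mul_gauss (a : ℝ) :
    ∫ t in Set.Iic a, -t * Real.exp (-t ^ 2 / 2) = Real.exp (-a ^ 2 / 2) := by
  have hderiv : ∀ x ∈ Set.Iio a, HasDerivAt (fun t : ℝ => Real.exp (-t ^ 2 / 2))
      (-x * Real.exp (-x ^ 2 / 2)) x := by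
    intro x _
    have h1 : HasDerivAt (fun t : ℝ => -t ^ 2 / 2) (-x) x := by
      have h := ((hasDerivAt_pow 2 x).neg).div_const 2
      refine h.congr_deriv ?_
      push_cast
      ring
    simpa [mul_comm] using h1.exp
  have hcont : ContinuousWithinAt (fun t : ℝ => Real.exp (-t ^ 2 / 2)) (Set.Iic a) a := by
    exact (Real.continuous_exp.comp (by continuity)).continuousWithinAt
  have htend : Tendsto (fun t : ℝ => Real.exp (-t ^ 2 / 2)) atBot (nhds 0) := by
    apply Real.tendsto_exp_atBot.comp
    refine tendsto_atBot_mono' atBot ?_ (tendsto_id.atBot_div_const two_pos)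
    filter_upwards [eventually_le_atBot (-1 : ℝ)] with t ht
    show -t ^ 2 / 2 ≤ t / 2
    nlinarith
  have := integral_Iic_of_hasDerivAt_of_tendsto hcont hderiv
    (neg_mul_gauss_integrableOn (Set.Iic a)) htend
  simpa using this

lemma Phi_pos (y : ℝ) : 0 < Phi y := by
  unfold Phi
  apply mul_pos (by positivity)
  rw [setIntegral_pos_iff_support_of_nonneg_ae]
  · have : Function.support (fun t : ℝ => Real.exp (-t ^ 2 / 2)) = Set.univ := by
      ext t; simp [Real.exp_ne_zero]
    rw [this, Set.univ_inter, Real.volume_Iic]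
    simp
  · filter_upwards with t using (Real.exp_pos _).le
  · exact gauss_integrableOn _

lemma Phi_le {y : ℝ} (hy : 0 < y) :
    Phi (-y) ≤ (Real.sqrt (2 * Real.pi))⁻¹ * (Real.exp (-y ^ 2 / 2) / y) := by
  unfold Phi
  apply mul_le_mul_of_nonneg_left _ (by positivity)
  have hle : ∫ t in Set.Iic (-y), Real.exp (-t ^ 2 / 2)
      ≤ ∫ t in Set.Iic (-y), (-t / y) * Real.exp (-t ^ 2 / 2) := by
    apply setIntegral_mono_on (gauss_integrableOn _)
    · have := (neg_mul_gauss_integrableOn (Set.Iic (-y))).div_const y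
      simp [div_mul_eq_mul_div, mul_div_assoc, mul_comm] at this ⊢
      exact this
    · exact measurableSet_Iic
    · intro t ht
      have h1 : (1 : ℝ) ≤ -t / y := (le_div_iff₀ hy).2 (by simp at ht; linarith)
      nlinarith [Real.exp_pos (-t ^ 2 / 2), (Real.exp_pos (-t ^ 2 / 2)).le]
  refine hle.trans ?_
  have : ∫ t in Set.Iic (-y), (-t / y) * Real.exp (-t ^ 2 / 2)
      = (∫ t in Set.Iic (-y), -t * Real.exp (-t ^ 2 / 2)) / y := by
    rw [← integral_div]
    congr 1; ext t; ring
  rw [this, integral_neg_mul_gauss]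
  simp [neg_pow]

lemma g1_gt (x : ℝ) : 1 / 2 < g1 x := by
  have := Phi_pos (-(2 * x))
  have := Real.exp_pos (2 * x ^ 2)
  unfold g1; nlinarith

lemma g1_le {x : ℝ} (hx : 0 < x) :
    g1 x ≤ 1 / 2 + (Real.sqrt (2 * Real.pi))⁻¹ * (2 * x)⁻¹ := by
  unfold g1
  have h2x : 0 < 2 * x := by linarith
  have h := Phi_le h2x
  have key : Real.exp (2 * x ^ 2) * Phi (-(2 * x))
      ≤ Real.exp (2 * x ^ 2) * ((Real.sqrt (2 * Real.pi))⁻¹ * (Real.exp (-(2*x) ^ 2 / 2) / (2*x))) :=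
    mul_le_mul_of_nonneg_left h (Real.exp_pos _).le
  refine add_le_add_right (key.trans (le_of_eq ?_)) _
  have : Real.exp (2 * x ^ 2) * Real.exp (-(2*x) ^ 2 / 2) = 1 := by
    rw [← Real.exp_add]; ring_nf; exact Real.exp_zero
  have this' : Real.exp (2 * x ^ 2) * Real.exp (-(2 * x ^ 2)) = 1 := by
    rw [← Real.exp_add]; simp
  field_simp
  nlinarith [this, this', Real.sq_sqrt (by positivity : (0:ℝ) ≤ 2 * Real.pi),
    Real.sqrt_nonneg (2 * Real.pi)]

theorem stmt6 :
    sInf (g1 '' Set.Ioi 0) = 1 / 2 ∧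
      Filter.Tendsto g1 Filter.atTop (nhds (1 / 2)) := by
  have hupper : Tendsto (fun x : ℝ => 1 / 2 + (Real.sqrt (2 * Real.pi))⁻¹ * (2 * x)⁻¹)
      atTop (nhds (1 / 2)) := by
    have h1 : Tendsto (fun x : ℝ => (2 * x)⁻¹) atTop (nhds 0) := by
      apply tendsto_inv_atTop_zero.comp
      exact (tendsto_id.const_mul_atTop (by norm_num : (0:ℝ) < 2))
    have := (h1.const_mul (Real.sqrt (2 * Real.pi))⁻¹).const_add (1/2 : ℝ)
    simpa using this
  have htend : Filter.Tendsto g1 Filter.atTop (nhds (1 / 2)) := by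
    apply tendsto_of_tendsto_of_tendsto_of_le_of_le' tendsto_const_nhds hupper
    · filter_upwards with x using (g1_gt x).le
    · filter_upwards [eventually_gt_atTop (0:ℝ)] with x hx using g1_le hx
  constructor
  · have hbdd : BddBelow (g1 '' Set.Ioi 0) := by
      refine ⟨1/2, ?_⟩
      rintro _ ⟨x, -, rfl⟩
      exact (g1_gt x).le
    apply le_antisymm
    · have h : ∀ x : ℝ, 0 < x →
          sInf (g1 '' Set.Ioi 0) ≤ 1 / 2 + (Real.sqrt (2 * Real.pi))⁻¹ * (2 * x)⁻¹ := by
        intro x hx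
        exact (csInf_le hbdd ⟨x, hx, rfl⟩).trans (g1_le hx)
      exact ge_of_tendsto hupper (by filter_upwards [eventually_gt_atTop (0:ℝ)] with x hx using h x hx)
    · refine le_csInf ⟨g1 1, ⟨1, by norm_num, rfl⟩⟩ ?_
      rintro _ ⟨x, -, rfl⟩
      exact (g1_gt x).le
  · exact htend
end
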